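/- arXiv:2311.04538 — 3 statements merged into one kernel-verified Lean document; each statement's English description precedes it below -/
import Mathlib

section
/- For any position i with 1 ≤ i ≤ m, the prefix of P[i..m] of length MS[i].len occurs in T, and P[i..i+MS[i].len−1] is contained in some MEM of P with respect to T; more precisely, there exists a MEM P[i'..j'] with i' ≤ i and i + MS[i].len − 1 ≤ j'. -/
/-- The (0-indexed) segment `P[i..j]` of a list, of length `j - i + 1`. -/
def seg (P : List α) (i j : ℕ) : List α := (P.drop i).take (j + 1 - i)

/-- `P[i..j]` is a MEM of `P` w.r.t. `T`: it occurs in `T` but cannot be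
extended left or right within `P` and still occur in `T`. -/
def IsMEM (P T : List α) (i j : ℕ) : Prop :=
  i ≤ j ∧ j < P.length ∧ (seg P i j <:+: T) ∧
    (i = 0 ∨ ¬ (seg P (i - 1) j <:+: T)) ∧
    (j + 1 = P.length ∨ ¬ (seg P i (j + 1) <:+: T))

/-!
Extend the match `P[i..i + ms i - 1]` first to the left as far as possible, then to the right
as far as possible. The result is right-maximal by construction, and it is still left-maximal
because any occurrence of a left extension of the final segment would contain an occurrence of
the corresponding left extension of the original match.
-/

section
variable {α : Type*}

lemma seg_prefix_seg_of_le (P : List α) (a : ℕ) {b b' : ℕ} (h : b ≤ b') :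
    seg P a b <+: seg P a b' :=
  List.take_prefix_take_left (by omega)

lemma seg_add_sub_one {n : ℕ} (P : List α) (i : ℕ) (hn : 1 ≤ n) :
    seg P i (i + n - 1) = (P.drop i).take n := by
  unfold seg
  congr 1
  omega

lemma exists_isMEM_of_seg_isInfix {P T : List α} {a b : ℕ} (hab : a ≤ b) (hb : b < P.length)
    (hocc : seg P a b <:+: T) : ∃ i j, IsMEM P T i j ∧ i ≤ a ∧ b ≤ j := by
  classical
  have hleft : ∃ i, seg P i b <:+: T := ⟨a, hocc⟩
  set i := Nat.find hleft
  have hi_occ : seg P i b <:+: T := Nat.find_spec hleft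
  have hia : i ≤ a := Nat.find_min' hleft hocc
  let R := fun k => b ≤ k ∧ seg P i k <:+: T
  have hb_last : b ≤ P.length - 1 := by omega
  set j := Nat.findGreatest R (P.length - 1)
  have hRj : R j := Nat.findGreatest_spec hb_last ⟨le_rfl, hi_occ⟩
  have hj_last : j ≤ P.length - 1 := Nat.findGreatest_le _
  refine ⟨i, j, ⟨by omega, by omega, hRj.2, ?_, ?_⟩, hia, hRj.1⟩
  · refine (Nat.eq_zero_or_pos i).imp_right fun hpos hext => ?_
    exact Nat.find_min hleft (by omega)
      ((seg_prefix_seg_of_le P (i - 1) hRj.1).isInfix.trans hext)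
  · refine (Nat.lt_or_ge (j + 1) P.length).symm.imp (by omega) fun hlt hext => ?_
    exact Nat.findGreatest_is_greatest (Nat.lt_succ_self j) (by omega) ⟨by omega, hext⟩

end

theorem match_in_mem_general {α : Type*} (P T : List α) (ms : ℕ → ℕ)
    (hms_le : ∀ i, ms i ≤ P.length - i)
    (hms_occ : ∀ i, ((P.drop i).take (ms i)) <:+: T)
    (hms_max : ∀ i l, l ≤ P.length - i → ((P.drop i).take l) <:+: T → l ≤ ms i)
    (hchar : ∀ c ∈ P, [c] <:+: T)
    (i : ℕ) (hi : i < P.length) :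
    ((P.drop i).take (ms i)) <:+: T ∧
      ∃ i' j', IsMEM P T i' j' ∧ i' ≤ i ∧ i + ms i - 1 ≤ j' := by
  refine ⟨hms_occ i, ?_⟩
  have hms_pos : 1 ≤ ms i := by
    refine hms_max i 1 (by omega) ?_
    rw [List.drop_eq_getElem_cons hi, List.take_one, List.head?_cons, Option.toList_some]
    exact hchar _ (P.getElem_mem hi)
  have hocc : seg P i (i + ms i - 1) <:+: T := by
    rw [seg_add_sub_one P i hms_pos]
    exact hms_occ i
  have hlen := hms_le i
  exact exists_isMEM_of_seg_isInfix (by omega) (by omega) hocc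

/-- the prefix of `P[i..]` of length `ms i` occurs in `T`, and the
match `P[i..i + ms i - 1]` is contained in some MEM `P[i'..j']` with `i' ≤ i`
and `i + ms i - 1 ≤ j'`. -/
theorem match_in_mem {α : Type*} [DecidableEq α] (P T : List α) (ms : ℕ → ℕ)
    (hms_le : ∀ i, ms i ≤ P.length - i)
    (hms_occ : ∀ i, ((P.drop i).take (ms i)) <:+: T)
    (hms_max : ∀ i l, l ≤ P.length - i → ((P.drop i).take l) <:+: T → l ≤ ms i)
    (hchar : ∀ c ∈ P, [c] <:+: T)
    (i : ℕ) (hi : i < P.length) :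
    ((P.drop i).take (ms i)) <:+: T ∧
      ∃ i' j', IsMEM P T i' j' ∧ i' ≤ i ∧ i + ms i - 1 ≤ j' :=
  match_in_mem_general P T ms hms_le hms_occ hms_max hchar i hi
end

section
/- Suppose P[i1..e], P[i2..e], and P[i3..e] (with i1 < i2 < i3) are all suffixes of the same MEM P[i1..e] (meaning MS[i'].len = e − i' + 1 for i' = i1 and i' = i3). Then MS[i2].len = e − i2 + 1, i.e., the matching-statistic length at i2 is determined without an additional query. -/
/-- if `P[i1..e]` and `P[i3..e]` are both the longest matches at
`i1` and `i3` (suffixes of the same MEM ending at `e`), with `i1 < i2 < i3`,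
then `MS[i2].len = e - i2 + 1` as well. (0-indexed; `e + 1 - i` is the length
of the segment `P[i..e]`.) -/
theorem ms_interpolate {α : Type*} [DecidableEq α] (P T : List α) (ms : ℕ → ℕ)
    (hms_le : ∀ i, ms i ≤ P.length - i)
    (hms_occ : ∀ i, ((P.drop i).take (ms i)) <:+: T)
    (hms_max : ∀ i l, l ≤ P.length - i → ((P.drop i).take l) <:+: T → l ≤ ms i)
    (hchar : ∀ c ∈ P, [c] <:+: T)
    (i1 i2 i3 e : ℕ) (h12 : i1 < i2) (h23 : i2 < i3) (h3e : i3 ≤ e)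
    (he : e < P.length)
    (h1 : ms i1 = e + 1 - i1) (h3 : ms i3 = e + 1 - i3) :
    ms i2 = e + 1 - i2 := by
  -- Lower bound: P[i2..e] is an infix of P[i1..e], which occurs in T.
  have hocc1 := hms_occ i1
  rw [h1] at hocc1
  have hsub : (P.drop i2).take (e + 1 - i2) =
      ((P.drop i1).take (e + 1 - i1)).drop (i2 - i1) := by
    rw [List.drop_take, List.drop_drop]
    congr 1
    · omega
    · congr 1; omega
  have hlow : e + 1 - i2 ≤ ms i2 := by
    apply hms_max i2 _ (by omega)
    rw [hsub]
    exact ((List.drop_suffix _ _).isInfix).trans hocc1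
  -- Upper bound: P[i3 .. i2 + ms i2 - 1] occurs in T, so ms i2 - (i3-i2) ≤ ms i3.
  have hocc2 := hms_occ i2
  have hsub2 : (P.drop i3).take (ms i2 - (i3 - i2)) =
      ((P.drop i2).take (ms i2)).drop (i3 - i2) := by
    rw [List.drop_take, List.drop_drop]
    congr 1
    congr 1
    omega
  have hup : ms i2 - (i3 - i2) ≤ ms i3 := by
    apply hms_max i3 _ (by have := hms_le i2; omega)
    rw [hsub2]
    exact ((List.drop_suffix _ _).isInfix).trans hocc2
  rw [h3] at hup
  omega
end

section
/- If P[i] equals the character of T immediately preceding an occurrence of the longest matched prefix at position i+1 (i.e., P[i] = T[MS[i+1].pos − 1] where T[MS[i+1].pos .. MS[i+1].pos + MS[i+1].len − 1] = P[i+1 .. i+MS[i+1].len]), then MS[i].len = MS[i+1].len + 1 and MS[i+1].pos − 1 is a valid matching-statistics position for i. -/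
/-!
The character `P[i] = T[p - 1]` extends the occurrence of `P[i+1 ..]` at `p` one step to the left,
so `ms i ≥ ms (i + 1) + 1`. Conversely, dropping the first character of a match for `P[i ..]`
leaves a match for `P[i+1 ..]`, so `ms (i + 1) ≥ ms i - 1`.
-/

namespace List

variable {α : Type*}

theorem take_drop_infix (l : List α) (n m : ℕ) : (l.drop n).take m <:+: l :=
  ((l.drop n).take_prefix m).isInfix.trans (l.drop_suffix n).isInfix

theorem take_pred_drop_succ_infix (l : List α) (n m : ℕ) :
    (l.drop (n + 1)).take (m - 1) <:+: (l.drop n).take m := by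
  have h : ((l.drop n).take m).drop 1 = (l.drop (n + 1)).take (m - 1) := by
    rw [drop_take, drop_drop, Nat.add_comm]
  exact h ▸ (drop_suffix 1 _).isInfix

theorem take_succ_drop_eq_of_getElem?_eq {l₁ l₂ : List α} {a b k : ℕ} (hb : b < l₂.length)
    (h : l₁[a]? = l₂[b]?) (htake : (l₁.drop (a + 1)).take k = (l₂.drop (b + 1)).take k) :
    (l₁.drop a).take (k + 1) = (l₂.drop b).take (k + 1) := by
  have ha : a < l₁.length := by
    by_contra! ha
    simp [getElem?_eq_none ha, getElem?_eq_getElem hb] at h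
  rw [getElem?_eq_getElem ha, getElem?_eq_getElem hb, Option.some_inj] at h
  rw [drop_eq_getElem_cons ha, drop_eq_getElem_cons hb, take_succ_cons, take_succ_cons, h, htake]

end List

theorem ms_lf_step_general {α : Type*} (P T : List α) (ms : ℕ → ℕ)
    (hms_le : ∀ i, ms i ≤ P.length - i)
    (hms_occ : ∀ i, ((P.drop i).take (ms i)) <:+: T)
    (hms_max : ∀ i l, l ≤ P.length - i → ((P.drop i).take l) <:+: T → l ≤ ms i)
    (i p : ℕ) (hi : i < P.length) (hp : 1 ≤ p)
    (hseg : (T.drop p).take (ms (i + 1)) = (P.drop (i + 1)).take (ms (i + 1)))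
    (hc : T[p - 1]? = P[i]?) :
    ms i = ms (i + 1) + 1 ∧
      (T.drop (p - 1)).take (ms (i + 1) + 1) = (P.drop i).take (ms (i + 1) + 1) := by
  obtain ⟨q, rfl⟩ := Nat.exists_eq_add_of_le' hp
  rw [Nat.add_sub_cancel] at hc ⊢
  have hext := List.take_succ_drop_eq_of_getElem?_eq hi hc hseg
  refine ⟨le_antisymm ?_ ?_, hext⟩
  · have hshift := (List.take_pred_drop_succ_infix P i (ms i)).trans (hms_occ i)
    have := hms_max (i + 1) (ms i - 1) (by have := hms_le i; omega) hshift
    omega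
  · refine hms_max i _ (by have := hms_le (i + 1); omega) ?_
    exact hext ▸ List.take_drop_infix T q _

/-- if `P[i] = T[p-1]` where `p = MS[i+1].pos` and
`T[p..p+MS[i+1].len-1] = P[i+1..i+MS[i+1].len]`, then `MS[i].len = MS[i+1].len + 1`
and `p - 1` is a valid matching-statistics position for `i`. -/
theorem ms_lf_step {α : Type*} [DecidableEq α] (P T : List α) (ms : ℕ → ℕ)
    (hms_le : ∀ i, ms i ≤ P.length - i)
    (hms_occ : ∀ i, ((P.drop i).take (ms i)) <:+: T)
    (hms_max : ∀ i l, l ≤ P.length - i → ((P.drop i).take l) <:+: T → l ≤ ms i)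
    (i p : ℕ) (hi : i < P.length) (hp : 1 ≤ p)
    (hseglen : ms (i + 1) ≤ T.length - p)
    (hseg : (T.drop p).take (ms (i + 1)) = (P.drop (i + 1)).take (ms (i + 1)))
    (hc : T[p - 1]? = P[i]?) :
    ms i = ms (i + 1) + 1 ∧
      (T.drop (p - 1)).take (ms (i + 1) + 1) = (P.drop i).take (ms (i + 1) + 1) :=
  ms_lf_step_general P T ms hms_le hms_occ hms_max i p hi hp hseg hc
end
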